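/- arXiv:1708.07629 — 4 statements merged into one kernel-verified Lean document; each statement's English description precedes it below -/
import Mathlib

section
/- Let $\chi_1 \leq \chi_2 < 0$ be integers, and let $L_1, L_2, N_1, N_2$ be integers with $N_1 \geq 1$, $N_2 \geq 1$, and $-N_i + 2\chi_i \leq L_i \leq N_i$ for $i = 1, 2$. Then $L_1 L_2 \leq (1 - 2\chi_1) N_1 N_2 + 4\chi_1\chi_2 - 2\chi_1$. -/
theorem stmt2 (χ₁ χ₂ L₁ L₂ N₁ N₂ : ℤ) (h12 : χ₁ ≤ χ₂) (h2 : χ₂ < 0)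
    (hN1 : 1 ≤ N₁) (hN2 : 1 ≤ N₂)
    (hL1l : -N₁ + 2 * χ₁ ≤ L₁) (hL1u : L₁ ≤ N₁)
    (hL2l : -N₂ + 2 * χ₂ ≤ L₂) (hL2u : L₂ ≤ N₂) :
    L₁ * L₂ ≤ (1 - 2 * χ₁) * (N₁ * N₂) + 4 * χ₁ * χ₂ - 2 * χ₁ := by
  nlinarith [mul_nonneg (by linarith : (0:ℤ) ≤ N₁ - L₁) (by linarith : (0:ℤ) ≤ N₂ - L₂),
    mul_nonneg (by linarith : (0:ℤ) ≤ N₁ - L₁) (by linarith : (0:ℤ) ≤ L₂ + N₂ - 2*χ₂),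
    mul_nonneg (by linarith : (0:ℤ) ≤ L₁ + N₁ - 2*χ₁) (by linarith : (0:ℤ) ≤ N₂ - L₂),
    mul_nonneg (by linarith : (0:ℤ) ≤ L₁ + N₁ - 2*χ₁) (by linarith : (0:ℤ) ≤ L₂ + N₂ - 2*χ₂),
    mul_nonneg (by linarith : (0:ℤ) ≤ -χ₁) (mul_nonneg (by linarith : (0:ℤ) ≤ N₁-1) (by linarith : (0:ℤ) ≤ N₂-1)),
    mul_nonneg (by linarith : (0:ℤ) ≤ χ₂ - χ₁) (by linarith : (0:ℤ) ≤ N₁ - 1),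
    mul_pos (by linarith : (0:ℤ) < -χ₁) (by linarith : (0:ℤ) < -χ₂)]
end

section
/- Let $\chi_1 \leq \chi_2 < 0$ be integers, and let $L_1, L_2, N_1, N_2$ be integers with $N_1 \geq 1$, $N_2 \geq 1$, and $-N_i + 2\chi_i \leq L_i \leq N_i$ for $i = 1, 2$. Then $L_1 L_2 \geq -(1 - 2\chi_1) N_1 N_2 + 2\chi_1$. -/
theorem stmt3 (χ₁ χ₂ L₁ L₂ N₁ N₂ : ℤ) (h12 : χ₁ ≤ χ₂) (h2 : χ₂ < 0)
    (hN1 : 1 ≤ N₁) (hN2 : 1 ≤ N₂)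
    (hL1l : -N₁ + 2 * χ₁ ≤ L₁) (hL1u : L₁ ≤ N₁)
    (hL2l : -N₂ + 2 * χ₂ ≤ L₂) (hL2u : L₂ ≤ N₂) :
    L₁ * L₂ ≥ -(1 - 2 * χ₁) * (N₁ * N₂) + 2 * χ₁ := by
  rcases le_or_gt 0 L₂ with h | h
  · nlinarith [mul_nonneg (by linarith : (0:ℤ) ≤ L₁ + N₁ - 2*χ₁) h,
      mul_nonneg (by linarith : (0:ℤ) ≤ N₁ - 2*χ₁) (by linarith : (0:ℤ) ≤ N₂ - L₂),
      mul_nonneg (by linarith : (0:ℤ) ≤ -χ₁) (mul_nonneg (by linarith : (0:ℤ) ≤ N₁ - 1) (by linarith : (0:ℤ) ≤ N₂))]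
  · nlinarith [mul_nonneg (by linarith : (0:ℤ) ≤ N₁ - L₁) (by linarith : (0:ℤ) ≤ -L₂),
      mul_nonneg (by linarith : (0:ℤ) ≤ N₁) (by linarith : (0:ℤ) ≤ L₂ + N₂ - 2*χ₂),
      mul_nonneg (by linarith : (0:ℤ) ≤ -χ₁) (mul_nonneg (by linarith : (0:ℤ) ≤ N₁) (by linarith : (0:ℤ) ≤ N₂ - 1)),
      mul_nonneg (by linarith : (0:ℤ) ≤ χ₂ - χ₁) (by linarith : (0:ℤ) ≤ N₁)]
end

section
/- Let $F_1, F_2, F_3, F_4$ be nonabelian free groups and let $\phi : F_1 \times F_2 \to F_3 \times F_4$ be an isomorphism. Then either $\phi(F_1 \times 1) = F_3 \times 1$ and $\phi(1 \times F_2) = 1 \times F_4$, or $\phi(F_1 \times 1) = 1 \times F_4$ and $\phi(1 \times F_2) = F_3 \times 1$. -/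
namespace ZVW

open FreeGroup

/-! ### Word combinatorics in free groups -/

/-- Distinct generators of a free group do not commute. -/
lemma eq_of_commute_of {α : Type*} {s t : α}
    (h : Commute (FreeGroup.of s) (FreeGroup.of t)) : s = t := by
  classical
  have h' : FreeGroup.of s * FreeGroup.of t = FreeGroup.of t * FreeGroup.of s := h
  have e1 : FreeGroup.of s * FreeGroup.of t = FreeGroup.mk [(s, true), (t, true)] := by
    rw [show (FreeGroup.of s : FreeGroup α) = FreeGroup.mk [(s, true)] from rfl,
      show (FreeGroup.of t : FreeGroup α) = FreeGroup.mk [(t, true)] from rfl, FreeGroup.mul_mk]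
    rfl
  have e2 : FreeGroup.of t * FreeGroup.of s = FreeGroup.mk [(t, true), (s, true)] := by
    rw [show (FreeGroup.of s : FreeGroup α) = FreeGroup.mk [(s, true)] from rfl,
      show (FreeGroup.of t : FreeGroup α) = FreeGroup.mk [(t, true)] from rfl, FreeGroup.mul_mk]
    rfl
  have := congrArg FreeGroup.toWord (e1 ▸ e2 ▸ h')
  rw [FreeGroup.toWord_mk, FreeGroup.toWord_mk] at this
  simp [FreeGroup.reduce.cons, FreeGroup.reduce_singleton] at this
  exact this.1

/-- An element of a free group on at least two generators commuting with
all generators is trivial. -/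
lemma eq_one_of_forall_commute {α : Type*} [Nontrivial α] {z : FreeGroup α}
    (h : ∀ t : α, Commute z (FreeGroup.of t)) : z = 1 := by
  classical
  by_contra hz
  have hwne : z.toWord ≠ [] := fun h' => hz (FreeGroup.toWord_eq_nil_iff.mp h')
  obtain ⟨⟨s, b⟩, w', hw⟩ := List.exists_cons_of_ne_nil hwne
  obtain ⟨t, ht⟩ := exists_ne s
  set v : List (α × Bool) := FreeGroup.invRev z.toWord with hv
  have hvne : v ≠ [] := by
    simp only [hv, FreeGroup.invRev]
    simpa using hwne
  obtain ⟨⟨s', c'⟩, v', hvc⟩ := List.exists_cons_of_ne_nil hvne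
  set ε : Bool := if s' = t then !c' else true with hε
  have hεne : ¬(s' = t ∧ ε = c') := by
    rintro ⟨rfl, h2⟩
    rw [hε, if_pos rfl] at h2
    simp at h2
  -- the element g = (of t)^{±1}
  set g : FreeGroup α := FreeGroup.mk [(t, ε)] with hg
  have hcom : Commute z g := by
    cases hε' : ε with
    | true =>
      have : g = FreeGroup.of t := by rw [hg, hε']; rfl
      rw [this]; exact h t
    | false =>
      have : g = (FreeGroup.of t)⁻¹ := by
        rw [hg, hε', show (FreeGroup.of t : FreeGroup α) = FreeGroup.mk [(t, true)] from rfl,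
          FreeGroup.inv_mk]
        simp [FreeGroup.invRev]
      rw [this]; exact (h t).inv_right
  have hginv : g⁻¹ = FreeGroup.mk [(t, !ε)] := by
    rw [hg, FreeGroup.inv_mk]; simp [FreeGroup.invRev]
  -- reducedness facts
  have hredw : FreeGroup.reduce z.toWord = z.toWord := FreeGroup.reduce_toWord z
  have hredv : FreeGroup.reduce v = v := by
    rw [hv, FreeGroup.reduce_invRev, hredw]
  -- toWord (g * z) = (t, ε) :: toWord z
  have t1 : (g * z).toWord = (t, ε) :: z.toWord := by
    conv_lhs => rw [hg, ← FreeGroup.mk_toWord (x := z), FreeGroup.mul_mk]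
    rw [FreeGroup.toWord_mk]
    show FreeGroup.reduce ((t, ε) :: z.toWord) = _
    rw [FreeGroup.reduce.cons, hredw, hw]
    simp only [List.casesOn]
    have : ¬(t = s ∧ ε = !b) := fun hc => ht hc.1
    simp [this]
  -- toWord (g⁻¹ * z⁻¹) = (t, !ε) :: v
  have t2 : (g⁻¹ * z⁻¹).toWord = (t, !ε) :: v := by
    have hzinv : z⁻¹ = FreeGroup.mk v := by
      rw [hv, ← FreeGroup.toWord_inv, FreeGroup.mk_toWord]
    conv_lhs => rw [hginv, hzinv, FreeGroup.mul_mk]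
    rw [FreeGroup.toWord_mk]
    show FreeGroup.reduce ((t, !ε) :: v) = _
    rw [FreeGroup.reduce.cons, hredv, hvc]
    have hne2 : ¬(t = s' ∧ ε = c') := by
      rintro ⟨rfl, h2⟩
      exact hεne ⟨rfl, h2⟩
    simp [hne2]
  -- but g⁻¹ * z⁻¹ = (g*z)⁻¹, whose word is invRev of (t, ε) :: toWord z
  have t3 : g⁻¹ * z⁻¹ = (g * z)⁻¹ := by
    rw [mul_inv_rev]
    exact (hcom.inv_inv.symm)
  have t4 : (t, !ε) :: v = v ++ [(t, !ε)] := by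
    have := congrArg FreeGroup.toWord t3
    rw [t2, FreeGroup.toWord_inv, t1] at this
    rw [this, hv]
    simp [FreeGroup.invRev]
  -- compare last entries
  have last1 : ((t, !ε) :: v).getLast? = v.getLast? := by
    rw [hvc]; exact List.getLast?_cons_cons ..
  have last2 : (v ++ [(t, !ε)]).getLast? = some (t, !ε) := List.getLast?_concat
  have last3 : v.getLast? = some (s, !b) := by
    rw [hv, FreeGroup.invRev, List.getLast?_reverse, hw]
    simp
  rw [t4, last2, last3] at last1
  simp only [Option.some.injEq, Prod.mk.injEq] at last1
  exact ht last1.1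

/-- A free group on a subsingleton type is commutative. -/
lemma commute_of_subsingleton {α : Type*} [Subsingleton α] (u v : FreeGroup α) :
    Commute u v := by
  rcases isEmpty_or_nonempty α with hα | hα
  · have : ∀ x : FreeGroup α, x = 1 := by
      intro x
      induction x using FreeGroup.induction_on with
      | C1 => rfl
      | of x => exact hα.elim x
      | inv_of x ih => rw [ih]; simp
      | mul x y ihx ihy => rw [ihx, ihy, one_mul]
    rw [this u, this v]
  · obtain ⟨x₀⟩ := hα
    have key : ∀ x : FreeGroup α, x ∈ Subgroup.zpowers (FreeGroup.of x₀) := by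
      intro x
      induction x using FreeGroup.induction_on with
      | C1 => exact one_mem _
      | of x => rw [show x = x₀ from Subsingleton.elim x x₀]; exact Subgroup.mem_zpowers _
      | inv_of x ih => exact inv_mem ih
      | mul x y ihx ihy => exact mul_mem ihx ihy
    obtain ⟨m, hm⟩ := Subgroup.mem_zpowers_iff.mp (key u)
    obtain ⟨n, hn⟩ := Subgroup.mem_zpowers_iff.mp (key v)
    rw [← hm, ← hn]
    exact Commute.zpow_zpow (Commute.refl _) m n

/-! ### Commutative transitivity of free groups -/

/-- Free groups are commutative transitive. -/
lemma commute_trans {α : Type*} {a b c : FreeGroup α} (ha : a ≠ 1)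
    (hab : Commute a b) (hac : Commute a c) : Commute b c := by
  classical
  set H := Subgroup.centralizer ({a} : Set (FreeGroup α)) with hH
  have haH : a ∈ H := Subgroup.mem_centralizer_iff.mpr (by rintro g rfl; rfl)
  have hbH : b ∈ H := Subgroup.mem_centralizer_iff.mpr (by rintro g rfl; exact hab)
  have hcH : c ∈ H := Subgroup.mem_centralizer_iff.mpr (by rintro g rfl; exact hac)
  -- H is a free group by Nielsen-Schreier
  let e : H ≃* FreeGroup (IsFreeGroup.Generators H) := IsFreeGroup.toFreeGroup H
  set z : FreeGroup (IsFreeGroup.Generators H) := e ⟨a, haH⟩ with hz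
  have hzne : z ≠ 1 := by
    intro h
    apply ha
    have : (⟨a, haH⟩ : H) = 1 := by
      apply e.injective; rw [← hz, h, _root_.map_one]
    exact congrArg Subtype.val this
  have hzcom : ∀ u : FreeGroup (IsFreeGroup.Generators H), Commute z u := by
    intro u
    have hu : Commute (⟨a, haH⟩ : H) (e.symm u) := by
      have hmem := (e.symm u).2
      have := Subgroup.mem_centralizer_iff.mp hmem a rfl
      exact Subtype.ext this
    simpa [hz] using hu.map e.toMonoidHom
  -- the generating set of H must be a subsingleton
  have hsub : Subsingleton (IsFreeGroup.Generators H) := by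
    by_contra hns
    rw [not_subsingleton_iff_nontrivial] at hns
    exact hzne (eq_one_of_forall_commute fun t => hzcom (FreeGroup.of t))
  -- hence H is commutative
  have : Commute (⟨b, hbH⟩ : H) (⟨c, hcH⟩ : H) := by
    have := commute_of_subsingleton (e ⟨b, hbH⟩) (e ⟨c, hcH⟩)
    have h2 := this.map e.symm.toMonoidHom
    simpa using h2
  exact congrArg Subtype.val this

/-- In a nonabelian free group every nontrivial element fails to commute
with something. -/
lemma exists_not_commute {α : Type*} [Nontrivial α] {a : FreeGroup α} (ha : a ≠ 1) :
    ∃ z : FreeGroup α, ¬Commute a z := by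
  obtain ⟨s, t, hst⟩ := exists_pair_ne α
  by_cases h1 : Commute a (FreeGroup.of s)
  · by_cases h2 : Commute a (FreeGroup.of t)
    · exact absurd (eq_of_commute_of (commute_trans ha h1 h2)) hst
    · exact ⟨_, h2⟩
  · exact ⟨_, h1⟩

/-- Two nontrivial elements of a nonabelian free group admit a common
non-commuting partner. -/
lemma exists_not_commute₂ {α : Type*} [Nontrivial α] {a a' : FreeGroup α}
    (ha : a ≠ 1) (ha' : a' ≠ 1) :
    ∃ z : FreeGroup α, ¬Commute a z ∧ ¬Commute a' z := by
  by_cases hc : Commute a a'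
  · obtain ⟨z, hz⟩ := exists_not_commute ha
    refine ⟨z, hz, fun h => hz ?_⟩
    exact commute_trans ha' hc.symm h
  · refine ⟨a * a', fun h => hc ?_, fun h => hc ?_⟩
    · have : a * (a * a') = a * a' * a := h
      have := mul_left_cancel (by rw [this, mul_assoc] : a * (a * a') = a * (a' * a))
      exact this
    · have : a' * (a * a') = a * a' * a' := h
      have h2 : a' * a * a' = a * a' * a' := by rw [mul_assoc]; exact this
      exact (mul_right_cancel h2).symm

/-! ### Pure elements of a product -/

/-- An element has a nonabelian centralizer. -/
def NCP {G : Type*} [Group G] (g : G) : Prop :=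
  ∃ u v, Commute g u ∧ Commute g v ∧ ¬Commute u v

lemma ncp_map {G H : Type*} [Group G] [Group H] (φ : G ≃* H) {g : G} (h : NCP g) :
    NCP (φ g) := by
  obtain ⟨u, v, h1, h2, h3⟩ := h
  exact ⟨φ u, φ v, h1.map φ.toMonoidHom, h2.map φ.toMonoidHom,
    fun hc => h3 (by simpa using hc.map φ.symm.toMonoidHom)⟩

lemma ncp_iff_map {G H : Type*} [Group G] [Group H] (φ : G ≃* H) (g : G) :
    NCP g ↔ NCP (φ g) :=
  ⟨ncp_map φ, fun h => by simpa using ncp_map φ.symm h⟩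

lemma commute_prod_iff {G H : Type*} [Group G] [Group H] (a c : G) (b d : H) :
    Commute ((a, b) : G × H) (c, d) ↔ Commute a c ∧ Commute b d := by
  constructor
  · intro h
    have := Prod.ext_iff.mp h
    exact ⟨this.1, this.2⟩
  · intro ⟨h1, h2⟩
    exact Prod.ext_iff.mpr ⟨h1, h2⟩

/-- In a product of two nonabelian free groups, the elements with nonabelian
centralizer are exactly those supported in one factor. -/
lemma pure_iff_ncp {A B : Type*} [Nontrivial A] [Nontrivial B]
    (g : FreeGroup A × FreeGroup B) :
    (g.1 = 1 ∨ g.2 = 1) ↔ NCP g := by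
  obtain ⟨g1, g2⟩ := g
  constructor
  · rintro (h | h) <;> simp only at h <;> subst h
    · obtain ⟨s, t, hst⟩ := exists_pair_ne A
      refine ⟨(FreeGroup.of s, 1), (FreeGroup.of t, 1), ?_, ?_, ?_⟩
      · exact (commute_prod_iff ..).mpr ⟨Commute.one_left _, Commute.one_right _⟩
      · exact (commute_prod_iff ..).mpr ⟨Commute.one_left _, Commute.one_right _⟩
      · intro h
        exact hst (eq_of_commute_of ((commute_prod_iff ..).mp h).1)
    · obtain ⟨s, t, hst⟩ := exists_pair_ne B
      refine ⟨(1, FreeGroup.of s), (1, FreeGroup.of t), ?_, ?_, ?_⟩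
      · exact (commute_prod_iff ..).mpr ⟨Commute.one_right _, Commute.one_left _⟩
      · exact (commute_prod_iff ..).mpr ⟨Commute.one_right _, Commute.one_left _⟩
      · intro h
        exact hst (eq_of_commute_of ((commute_prod_iff ..).mp h).2)
  · rintro ⟨⟨u1, u2⟩, ⟨v1, v2⟩, h1, h2, h3⟩
    by_contra hp
    push_neg at hp
    obtain ⟨hg1, hg2⟩ := hp
    apply h3
    obtain ⟨h1a, h1b⟩ := (commute_prod_iff ..).mp h1
    obtain ⟨h2a, h2b⟩ := (commute_prod_iff ..).mp h2
    exact (commute_prod_iff ..).mpr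
      ⟨commute_trans hg1 h1a h2a, commute_trans hg2 h1b h2b⟩

/-! ### The dichotomy for injections with pure images -/

/-- If an injective hom from a nonabelian free group into a product of two
nonabelian free groups has all images pure, then the image lies in one factor. -/
lemma dichotomy {S C D : Type*} [Nontrivial S] [Nontrivial C] [Nontrivial D]
    (ψ : FreeGroup S →* FreeGroup C × FreeGroup D) (hinj : Function.Injective ψ)
    (hpure : ∀ x, (ψ x).1 = 1 ∨ (ψ x).2 = 1) :
    (∀ x, (ψ x).2 = 1) ∨ (∀ x, (ψ x).1 = 1) := by
  by_cases h : ∀ x, (ψ x).2 = 1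
  · exact Or.inl h
  push_neg at h
  obtain ⟨a₁, ha₁⟩ := h
  have ha₁1 : (ψ a₁).1 = 1 := (hpure a₁).resolve_right ha₁
  have ha₁ne : a₁ ≠ 1 := by
    rintro rfl
    rw [_root_.map_one] at ha₁; exact ha₁ rfl
  right
  intro a
  by_contra hc
  have ha2 : (ψ a).2 = 1 := (hpure a).resolve_left hc
  have hane : a ≠ 1 := by
    rintro rfl
    rw [_root_.map_one] at hc; exact hc rfl
  obtain ⟨z, hz1, hz2⟩ := exists_not_commute₂ hane ha₁ne
  have hψz1 : ¬Commute (ψ a) (ψ z) := by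
    intro h
    exact hz1 (by
      have : Commute (ψ a) (ψ z) := h
      have heq : ψ (a * z) = ψ (z * a) := by rw [_root_.map_mul, _root_.map_mul, this]
      have := hinj heq
      exact this)
  have hψz2 : ¬Commute (ψ a₁) (ψ z) := by
    intro h
    exact hz2 (by
      have heq : ψ (a₁ * z) = ψ (z * a₁) := by rw [_root_.map_mul, _root_.map_mul, h]
      exact hinj heq)
  rcases hpure z with hl | hr
  · -- ψ z = (1, w); it commutes with ψ a = (c, 1)
    apply hψz1
    have hψa : ψ a = ((ψ a).1, 1) := by rw [← ha2]
    have hψz : ψ z = (1, (ψ z).2) := by rw [← hl]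
    rw [hψa, hψz]
    exact (commute_prod_iff ..).mpr ⟨Commute.one_right _, Commute.one_left _⟩
  · -- ψ z = (w, 1); it commutes with ψ a₁ = (1, d)
    apply hψz2
    have hψa : ψ a₁ = (1, (ψ a₁).2) := by rw [← ha₁1]
    have hψz : ψ z = ((ψ z).1, 1) := by rw [← hr]
    rw [hψa, hψz]
    exact (commute_prod_iff ..).mpr ⟨Commute.one_left _, Commute.one_right _⟩

end ZVW

/-- Splitting of isomorphisms between products of nonabelian free groups:
the isomorphism either preserves the factors or swaps them. -/
theorem stmt10 {S₁ S₂ S₃ S₄ : Type*}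
    [Nontrivial S₁] [Nontrivial S₂] [Nontrivial S₃] [Nontrivial S₄]
    (φ : FreeGroup S₁ × FreeGroup S₂ ≃* FreeGroup S₃ × FreeGroup S₄) :
    (Subgroup.map φ.toMonoidHom ((⊤ : Subgroup (FreeGroup S₁)).prod ⊥) =
        (⊤ : Subgroup (FreeGroup S₃)).prod ⊥ ∧
      Subgroup.map φ.toMonoidHom ((⊥ : Subgroup (FreeGroup S₁)).prod ⊤) =
        (⊥ : Subgroup (FreeGroup S₃)).prod ⊤) ∨
    (Subgroup.map φ.toMonoidHom ((⊤ : Subgroup (FreeGroup S₁)).prod ⊥) =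
        (⊥ : Subgroup (FreeGroup S₃)).prod ⊤ ∧
      Subgroup.map φ.toMonoidHom ((⊥ : Subgroup (FreeGroup S₁)).prod ⊤) =
        (⊤ : Subgroup (FreeGroup S₃)).prod ⊥) := by
  classical
  -- purity is transported by φ in both directions
  have purity : ∀ g : FreeGroup S₁ × FreeGroup S₂,
      (g.1 = 1 ∨ g.2 = 1) ↔ ((φ g).1 = 1 ∨ (φ g).2 = 1) := by
    intro g
    rw [ZVW.pure_iff_ncp, ZVW.pure_iff_ncp, ZVW.ncp_iff_map φ]
  have purity' : ∀ g : FreeGroup S₃ × FreeGroup S₄,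
      (g.1 = 1 ∨ g.2 = 1) ↔ ((φ.symm g).1 = 1 ∨ (φ.symm g).2 = 1) := by
    intro g
    rw [ZVW.pure_iff_ncp, ZVW.pure_iff_ncp, ZVW.ncp_iff_map φ.symm]
  -- the four injections
  let ψ₁ : FreeGroup S₁ →* FreeGroup S₃ × FreeGroup S₄ :=
    φ.toMonoidHom.comp (MonoidHom.inl (FreeGroup S₁) (FreeGroup S₂))
  let ψ₂ : FreeGroup S₂ →* FreeGroup S₃ × FreeGroup S₄ :=
    φ.toMonoidHom.comp (MonoidHom.inr (FreeGroup S₁) (FreeGroup S₂))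
  have hψ₁inj : Function.Injective ψ₁ :=
    φ.injective.comp (fun a b h => by simpa using congrArg Prod.fst h)
  have hψ₂inj : Function.Injective ψ₂ :=
    φ.injective.comp (fun a b h => by simpa using congrArg Prod.snd h)
  have hψ₁pure : ∀ a, (ψ₁ a).1 = 1 ∨ (ψ₁ a).2 = 1 := by
    intro a
    exact (purity (a, 1)).mp (Or.inr rfl)
  have hψ₂pure : ∀ b, (ψ₂ b).1 = 1 ∨ (ψ₂ b).2 = 1 := by
    intro b
    exact (purity (1, b)).mp (Or.inl rfl)
  have D1 := ZVW.dichotomy ψ₁ hψ₁inj hψ₁pure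
  have D2 := ZVW.dichotomy ψ₂ hψ₂inj hψ₂pure
  have hψ₁eq : ∀ a, ψ₁ a = φ (a, 1) := fun a => rfl
  have hψ₂eq : ∀ b, ψ₂ b = φ (1, b) := fun b => rfl
  have honeone₁₂ : ((1 : FreeGroup S₁), (1 : FreeGroup S₂)) = 1 := rfl
  have honeone₃₄ : ((1 : FreeGroup S₃), (1 : FreeGroup S₄)) = 1 := rfl
  -- φ(F₁ × 1) and φ(1 × F₂) can't both land in the same factor
  have hnot_both_left : ¬((∀ a, (ψ₁ a).2 = 1) ∧ (∀ b, (ψ₂ b).2 = 1)) := by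
    rintro ⟨hL, hR⟩
    obtain ⟨s, t, hst⟩ := exists_pair_ne S₄
    have hp := (purity' (1, FreeGroup.of s)).mp (Or.inl rfl)
    have hφg : φ (φ.symm (1, FreeGroup.of s)) = (1, FreeGroup.of s) := φ.apply_symm_apply _
    rcases hp with h | h
    · have hg : φ.symm (1, FreeGroup.of s) = (1, (φ.symm (1, FreeGroup.of s)).2) :=
        Prod.ext_iff.mpr ⟨h, rfl⟩
      have h2 : (φ (1, (φ.symm (1, FreeGroup.of s)).2)).2 = 1 := hR _
      rw [← hg, hφg] at h2
      exact FreeGroup.of_ne_one s h2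
    · have hg : φ.symm (1, FreeGroup.of s) = ((φ.symm (1, FreeGroup.of s)).1, 1) :=
        Prod.ext_iff.mpr ⟨rfl, h⟩
      have h2 : (φ ((φ.symm (1, FreeGroup.of s)).1, 1)).2 = 1 := hL _
      rw [← hg, hφg] at h2
      exact FreeGroup.of_ne_one s h2
  have hnot_both_right : ¬((∀ a, (ψ₁ a).1 = 1) ∧ (∀ b, (ψ₂ b).1 = 1)) := by
    rintro ⟨hL, hR⟩
    obtain ⟨s, t, hst⟩ := exists_pair_ne S₃
    have hp := (purity' (FreeGroup.of s, 1)).mp (Or.inr rfl)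
    have hφg : φ (φ.symm (FreeGroup.of s, 1)) = (FreeGroup.of s, 1) := φ.apply_symm_apply _
    rcases hp with h | h
    · have hg : φ.symm (FreeGroup.of s, 1) = (1, (φ.symm (FreeGroup.of s, 1)).2) :=
        Prod.ext_iff.mpr ⟨h, rfl⟩
      have h2 : (φ (1, (φ.symm (FreeGroup.of s, 1)).2)).1 = 1 := hR _
      rw [← hg, hφg] at h2
      exact FreeGroup.of_ne_one s h2
    · have hg : φ.symm (FreeGroup.of s, 1) = ((φ.symm (FreeGroup.of s, 1)).1, 1) :=
        Prod.ext_iff.mpr ⟨rfl, h⟩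
      have h2 : (φ ((φ.symm (FreeGroup.of s, 1)).1, 1)).1 = 1 := hL _
      rw [← hg, hφg] at h2
      exact FreeGroup.of_ne_one s h2
  -- membership simplification
  have memTB : ∀ (x : FreeGroup S₁ × FreeGroup S₂),
      (x ∈ (⊤ : Subgroup (FreeGroup S₁)).prod ⊥ ↔ x.2 = 1) := fun x => by
    simp [Subgroup.mem_prod]
  have memBT : ∀ (x : FreeGroup S₁ × FreeGroup S₂),
      (x ∈ (⊥ : Subgroup (FreeGroup S₁)).prod ⊤ ↔ x.1 = 1) := fun x => by
    simp [Subgroup.mem_prod]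
  have memTB' : ∀ (x : FreeGroup S₃ × FreeGroup S₄),
      (x ∈ (⊤ : Subgroup (FreeGroup S₃)).prod ⊥ ↔ x.2 = 1) := fun x => by
    simp [Subgroup.mem_prod]
  have memBT' : ∀ (x : FreeGroup S₃ × FreeGroup S₄),
      (x ∈ (⊥ : Subgroup (FreeGroup S₃)).prod ⊤ ↔ x.1 = 1) := fun x => by
    simp [Subgroup.mem_prod]
  rcases D1 with h1 | h1
  · -- φ(F₁ × 1) ⊆ F₃ × 1
    have h2 : ∀ b, (ψ₂ b).1 = 1 := D2.resolve_left fun h2 => hnot_both_left ⟨h1, h2⟩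
    -- reverse directions for φ.symm
    have h3 : ∀ c, (φ.symm (c, 1)).2 = 1 := by
      intro c
      rcases (purity' (c, 1)).mp (Or.inr rfl) with h | h
      · have hg : φ.symm (c, 1) = (1, (φ.symm (c, 1)).2) := Prod.ext_iff.mpr ⟨h, rfl⟩
        have h4 : (φ (1, (φ.symm (c, 1)).2)).1 = 1 := h2 _
        rw [← hg, φ.apply_symm_apply] at h4
        rw [show c = 1 from h4]
        rw [honeone₃₄, _root_.map_one]
        rfl
      · exact h
    have h4 : ∀ d, (φ.symm (1, d)).1 = 1 := by
      intro d
      rcases (purity' (1, d)).mp (Or.inl rfl) with h | h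
      · exact h
      · have hg : φ.symm (1, d) = ((φ.symm (1, d)).1, 1) := Prod.ext_iff.mpr ⟨rfl, h⟩
        have h4 : (φ ((φ.symm (1, d)).1, 1)).2 = 1 := h1 _
        rw [← hg, φ.apply_symm_apply] at h4
        rw [show d = 1 from h4]
        rw [honeone₃₄, _root_.map_one]
        rfl
    refine Or.inl ⟨?_, ?_⟩
    · ext x
      rw [memTB']
      constructor
      · rintro ⟨g, hg, rfl⟩
        have hg2 : g.2 = 1 := (memTB g).mp hg
        have hgeq : g = (g.1, 1) := Prod.ext_iff.mpr ⟨rfl, hg2⟩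
        rw [hgeq]
        exact h1 g.1
      · intro hx
        refine ⟨φ.symm x, ?_, φ.apply_symm_apply _⟩
        have hxeq : x = (x.1, 1) := Prod.ext_iff.mpr ⟨rfl, hx⟩
        exact (memTB _).mpr (by rw [hxeq]; exact h3 x.1)
    · ext x
      rw [memBT']
      constructor
      · rintro ⟨g, hg, rfl⟩
        have hg2 : g.1 = 1 := (memBT g).mp hg
        have hgeq : g = (1, g.2) := Prod.ext_iff.mpr ⟨hg2, rfl⟩
        rw [hgeq]
        exact h2 g.2
      · intro hx
        refine ⟨φ.symm x, ?_, φ.apply_symm_apply _⟩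
        have hxeq : x = (1, x.2) := Prod.ext_iff.mpr ⟨hx, rfl⟩
        exact (memBT _).mpr (by rw [hxeq]; exact h4 x.2)
  · -- φ(F₁ × 1) ⊆ 1 × F₄
    have h2 : ∀ b, (ψ₂ b).2 = 1 := D2.resolve_right fun h2 => hnot_both_right ⟨h1, h2⟩
    have h3 : ∀ c, (φ.symm (c, 1)).1 = 1 := by
      intro c
      rcases (purity' (c, 1)).mp (Or.inr rfl) with h | h
      · exact h
      · have hg : φ.symm (c, 1) = ((φ.symm (c, 1)).1, 1) := Prod.ext_iff.mpr ⟨rfl, h⟩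
        have h4 : (φ ((φ.symm (c, 1)).1, 1)).1 = 1 := h1 _
        rw [← hg, φ.apply_symm_apply] at h4
        rw [show c = 1 from h4]
        rw [honeone₃₄, _root_.map_one]
        rfl
    have h4 : ∀ d, (φ.symm (1, d)).2 = 1 := by
      intro d
      rcases (purity' (1, d)).mp (Or.inl rfl) with h | h
      · have hg : φ.symm (1, d) = (1, (φ.symm (1, d)).2) := Prod.ext_iff.mpr ⟨h, rfl⟩
        have h4 : (φ (1, (φ.symm (1, d)).2)).2 = 1 := h2 _
        rw [← hg, φ.apply_symm_apply] at h4
        rw [show d = 1 from h4]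
        rw [honeone₃₄, _root_.map_one]
        rfl
      · exact h
    refine Or.inr ⟨?_, ?_⟩
    · ext x
      rw [memBT']
      constructor
      · rintro ⟨g, hg, rfl⟩
        have hg2 : g.2 = 1 := (memTB g).mp hg
        have hgeq : g = (g.1, 1) := Prod.ext_iff.mpr ⟨rfl, hg2⟩
        rw [hgeq]
        exact h1 g.1
      · intro hx
        refine ⟨φ.symm x, ?_, φ.apply_symm_apply _⟩
        have hxeq : x = (1, x.2) := Prod.ext_iff.mpr ⟨hx, rfl⟩
        exact (memTB _).mpr (by rw [hxeq]; exact h4 x.2)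
    · ext x
      rw [memTB']
      constructor
      · rintro ⟨g, hg, rfl⟩
        have hg2 : g.1 = 1 := (memBT g).mp hg
        have hgeq : g = (1, g.2) := Prod.ext_iff.mpr ⟨hg2, rfl⟩
        rw [hgeq]
        exact h2 g.2
      · intro hx
        refine ⟨φ.symm x, ?_, φ.apply_symm_apply _⟩
        have hxeq : x = (x.1, 1) := Prod.ext_iff.mpr ⟨rfl, hx⟩
        exact (memBT _).mpr (by rw [hxeq]; exact h3 x.1)
end

section
/- The fundamental group of a closed orientable surface of genus $g \geq 2$ has trivial center. -/
/-!
Cutting the surface of genus `m + n` along a separating curve exhibits its fundamental group as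
the amalgamated product `F₂ₘ *_ℤ F₂ₙ`, the generator of `ℤ` going to the boundary words
`[a₁,b₁]⋯[aₘ,bₘ]` and `([aₘ₊₁,bₘ₊₁]⋯[aₘ₊ₙ,bₘ₊ₙ])⁻¹`. In an amalgamated product with at least two
factors, each strictly larger than the amalgamated subgroup, a central element lies in that
subgroup: otherwise it is a nonempty reduced word, and its commutator with a suitable letter is
again a nonempty reduced word, hence nontrivial. So a central element is a power `cᵏ` of
`c = [a₁,b₁]`, and it commutes with `a₁`. In the infinite dihedral group, sending `a₁` to a
reflection and `b₁` to the unit rotation, `c` becomes the rotation by `-2`, and a reflection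
commutes with no nontrivial rotation; hence `k = 0`.
-/

open scoped commutatorElement in
/-- The relator `[a₁,b₁]⋯[a_g,b_g]` of the genus-`g` surface group, in the free
group on generators `aᵢ` (`Sum.inl i`) and `bᵢ` (`Sum.inr i`). -/
def surfaceRelator (g : ℕ) : FreeGroup (Fin g ⊕ Fin g) :=
  (List.ofFn fun i : Fin g =>
    ⁅FreeGroup.of (Sum.inl i : Fin g ⊕ Fin g), FreeGroup.of (Sum.inr i : Fin g ⊕ Fin g)⁆).prod

open Monoid Subgroup Function DihedralGroup
open scoped commutatorElement

namespace Monoid.PushoutI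

open CoprodI

variable {ι : Type*} {G : ι → Type*} [∀ i, Group (G i)] {H : Type*} [Group H]
  {φ : ∀ i, H →* G i}

variable (φ) in
def prodLetters (L : List (Σ i, G i)) : PushoutI φ :=
  (L.map fun p => of p.1 p.2).prod

@[simp]
theorem prodLetters_cons (p : Σ i, G i) (L : List (Σ i, G i)) :
    prodLetters φ (p :: L) = of p.1 p.2 * prodLetters φ L := List.prod_cons

@[simp]
theorem prodLetters_append (L M : List (Σ i, G i)) :
    prodLetters φ (L ++ M) = prodLetters φ L * prodLetters φ M := by
  simp [prodLetters]

theorem ofCoprodI_word_prod (w : Word G) : ofCoprodI w.prod = prodLetters φ w.toList := by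
  simp [Word.prod, prodLetters, map_list_prod, Function.comp_def]

def invLetters (L : List (Σ i, G i)) : List (Σ i, G i) :=
  (L.map fun p => ⟨p.1, p.2⁻¹⟩).reverse

@[simp]
theorem prodLetters_invLetters (L : List (Σ i, G i)) :
    prodLetters φ (invLetters L) = (prodLetters φ L)⁻¹ := by
  simp [prodLetters, invLetters, List.prod_inv_reverse, List.map_reverse, Function.comp_def]

theorem head?_invLetters (L : List (Σ i, G i)) :
    (invLetters L).head? = L.getLast?.map fun p => ⟨p.1, p.2⁻¹⟩ := by
  simp [invLetters, List.head?_reverse, List.getLast?_map]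

variable (φ) in
/-- `Monoid.PushoutI.Reduced` together with the alternation condition of a `Word`, for lists. -/
def IsReducedList (L : List (Σ i, G i)) : Prop :=
  (∀ p ∈ L, p.2 ∉ (φ p.1).range) ∧ L.IsChain fun p q => p.1 ≠ q.1

theorem IsReducedList.tail {p : Σ i, G i} {L : List (Σ i, G i)}
    (h : IsReducedList φ (p :: L)) : IsReducedList φ L :=
  ⟨fun q hq => h.1 q (List.mem_cons_of_mem _ hq), h.2.tail⟩

theorem IsReducedList.invLetters {L : List (Σ i, G i)} (hL : IsReducedList φ L) :
    IsReducedList φ (invLetters L) := by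
  refine ⟨?_, ?_⟩
  · simp only [PushoutI.invLetters, List.mem_reverse, List.mem_map]
    rintro _ ⟨p, hp, rfl⟩
    simpa using hL.1 p hp
  · rw [PushoutI.invLetters, List.isChain_reverse, List.isChain_map]
    exact hL.2.imp fun _ _ h => Ne.symm h

theorem IsReducedList.prodLetters_ne_one (hφ : ∀ i, Injective (φ i)) {L : List (Σ i, G i)}
    (hL : IsReducedList φ L) (hne : L ≠ []) : prodLetters φ L ≠ 1 := by
  intro h1
  let w : Word G := ⟨L, fun p hp h => hL.1 p hp (h ▸ one_mem _), hL.2⟩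
  have := Reduced.eq_empty_of_mem_range hφ (w := w) hL.1
    (ofCoprodI_word_prod (φ := φ) w ▸ h1 ▸ one_mem _)
  exact hne (congrArg Word.toList this)

/-- `b T b⁻¹ T⁻¹` is spelled by a nonempty reduced list, so it is not `1`. -/
theorem not_commute_of_isReducedList (hφ : ∀ i, Injective (φ i)) {L : List (Σ i, G i)}
    (hL : IsReducedList φ L) (hne : L ≠ []) {j : ι} {b : G j} (hb : b ∉ (φ j).range)
    (hhead : ∀ p ∈ L.head?, p.1 ≠ j) (hlast : ∀ p ∈ L.getLast?, p.1 ≠ j) :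
    ¬Commute (of j b) (prodLetters φ L) := by
  intro hcomm
  have hred : IsReducedList φ (⟨j, b⟩ :: (L ++ ⟨j, b⁻¹⟩ :: invLetters L)) := by
    refine ⟨?_, ?_⟩
    · simp only [List.mem_cons, List.mem_append]
      rintro p (rfl | hp | rfl | hp)
      · exact hb
      · exact hL.1 p hp
      · simpa using hb
      · exact hL.invLetters.1 p hp
    · simp only [List.isChain_cons, List.isChain_append, List.head?_append_of_ne_nil _ hne,
        head?_invLetters, Option.mem_map]
      refine ⟨fun p hp => (hhead p hp).symm, hL.2, ⟨?_, hL.invLetters.2⟩, ?_⟩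
      · rintro _ ⟨p, hp, rfl⟩
        exact (hlast p hp).symm
      · rintro p hp _ ⟨⟩
        exact hlast p hp
  refine hred.prodLetters_ne_one hφ (List.cons_ne_nil _ _) ?_
  rw [prodLetters_cons, prodLetters_append, prodLetters_cons, prodLetters_invLetters,
    map_inv, ← mul_assoc, hcomm.eq]
  group

theorem notMem_range_of_mem_set (d : NormalWord.Transversal φ) {i : ι} {g : G i}
    (hg : g ∈ d.set i) (hg1 : g ≠ 1) : g ∉ (φ i).range := fun hgr =>
  hg1 <| ((d.compl i).equiv_snd_eq_self_iff_mem (one_mem _)).2 hg ▸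
    ((d.compl i).coe_equiv_snd_eq_one_iff_mem (d.one_mem i)).2 hgr

/-- The base part of the normal form is absorbed into the first letter. -/
theorem exists_isReducedList_of_notMem_range (hφ : ∀ i, Injective (φ i)) {z : PushoutI φ}
    (hz : z ∉ (base φ).range) :
    ∃ (i : ι) (x : G i) (L : List (Σ i, G i)), IsReducedList φ (⟨i, x⟩ :: L) ∧
      z = prodLetters φ (⟨i, x⟩ :: L) := by
  classical
  obtain ⟨d⟩ := NormalWord.transversal_nonempty φ hφ
  set w : NormalWord d := NormalWord.equiv z
  have hwz : z = base φ w.head * prodLetters φ w.toList := by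
    rw [← ofCoprodI_word_prod]
    exact (NormalWord.equiv.symm_apply_apply z).symm
  have hred : IsReducedList φ w.toList :=
    ⟨fun p hp => notMem_range_of_mem_set d (w.normalized p.1 p.2 hp) (w.ne_one p hp),
      w.chain_ne⟩
  rcases hw : w.toList with _ | ⟨⟨i, y⟩, L⟩
  · exact absurd ⟨w.head, by simp [hwz, hw, prodLetters]⟩ hz
  rw [hw] at hred hwz
  refine ⟨i, φ i w.head * y, L, ⟨?_, List.isChain_cons.2 (List.isChain_cons.1 hred.2)⟩, ?_⟩
  · intro p hp
    rcases List.mem_cons.1 hp with rfl | hp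
    · exact fun hmem => hred.1 _ List.mem_cons_self
        ((mul_mem_cancel_left (MonoidHom.mem_range.2 ⟨w.head, rfl⟩)).1 hmem)
    · exact hred.1 p (List.mem_cons_of_mem _ hp)
  · rw [hwz, prodLetters_cons, prodLetters_cons, map_mul, of_apply_eq_base, mul_assoc]

theorem center_le_range_base (hφ : ∀ i, Injective (φ i)) [Nontrivial ι]
    (hφ_ne_top : ∀ i, (φ i).range ≠ ⊤) : center (PushoutI φ) ≤ (base φ).range := by
  intro z hz
  by_contra hzb
  obtain ⟨i, x, L, hL, rfl⟩ := exists_isReducedList_of_notMem_range hφ hzb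
  have hcomm : ∀ j (b : G j), Commute (of j b) (prodLetters φ (⟨i, x⟩ :: L)) :=
    fun j b => mem_center_iff.1 hz (of j b)
  by_cases hlast : ((⟨i, x⟩ :: L).getLast (List.cons_ne_nil _ _)).1 = i
  · obtain ⟨j, hji⟩ := exists_ne i
    obtain ⟨b, hb⟩ := SetLike.exists_not_mem_of_ne_top _ (hφ_ne_top j) rfl
    refine not_commute_of_isReducedList hφ hL (List.cons_ne_nil _ _) hb ?_ ?_ (hcomm j b)
    · rintro p ⟨⟩
      exact hji.symm
    · rw [List.getLast?_eq_some_getLast (List.cons_ne_nil _ _)]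
      rintro p ⟨⟩
      rw [hlast]
      exact hji.symm
  · -- `x` commutes with `x T`, hence with `T`, whose first and last letters are not in `G i`
    have hLne : L ≠ [] := by rintro rfl; exact hlast rfl
    refine not_commute_of_isReducedList hφ hL.tail hLne (hL.1 _ List.mem_cons_self)
      (fun p hp => ((List.isChain_cons.1 hL.2).1 p hp).symm) ?_ ?_
    · rw [List.getLast?_eq_some_getLast hLne]
      rintro p ⟨⟩
      rwa [List.getLast_cons hLne] at hlast
    · simpa [Commute, SemiconjBy, mul_assoc] using hcomm i x

end Monoid.PushoutI

theorem Subgroup.center_eq_bot_of_mulEquiv {G H : Type*} [Group G] [Group H] (e : G ≃* H)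
    (h : center H = ⊥) : center G = ⊥ :=
  eq_bot_iff.2 fun z hz => by
    have : e z ∈ center H := MulEquivClass.apply_mem_center e hz
    rwa [h, mem_bot, map_eq_one_iff e e.injective] at this

theorem injective_zpowersHom {G : Type*} [Group G] {x : G} (hx : ¬IsOfFinOrder x) :
    Injective (zpowersHom G x) :=
  (injective_zpow_iff_not_isOfFinOrder.2 hx).comp Multiplicative.toAdd.injective

theorem map_surfaceRelator {g : ℕ} {K : Type*} [Group K] (f : FreeGroup (Fin g ⊕ Fin g) →* K) :
    f (surfaceRelator g) =
      (List.ofFn fun i => ⁅f (.of (.inl i)), f (.of (.inr i))⁆).prod := by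
  simp [surfaceRelator, map_list_prod, List.map_ofFn, Function.comp_def, map_commutatorElement]

def toInfDihedral (m : ℕ) : FreeGroup (Fin (m + 1) ⊕ Fin (m + 1)) →* DihedralGroup 0 :=
  FreeGroup.lift <| Sum.elim (Fin.cases (sr 0) fun _ => 1) (Fin.cases (r 1) fun _ => 1)

theorem toInfDihedral_surfaceRelator (m : ℕ) :
    toInfDihedral m (surfaceRelator (m + 1)) = r (-2) := by
  norm_num [map_surfaceRelator, List.ofFn_succ, toInfDihedral, commutatorElement_def]

theorem toInfDihedral_of_inl_zero (m : ℕ) : toInfDihedral m (.of (.inl 0)) = sr 0 := by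
  simp [toInfDihedral]

theorem not_isOfFinOrder_surfaceRelator (m : ℕ) : ¬IsOfFinOrder (surfaceRelator (m + 1)) := by
  intro h
  obtain ⟨n, hn, hpow⟩ := ((toInfDihedral m).isOfFinOrder h).exists_pow_eq_one
  rw [toInfDihedral_surfaceRelator, r_pow] at hpow
  have : -2 * (n : ℤ) = 0 := r.inj (hpow.trans DihedralGroup.one_def)
  omega

theorem of_inl_zero_notMem_zpowers_surfaceRelator (m : ℕ) :
    FreeGroup.of (.inl 0) ∉ zpowers (surfaceRelator (m + 1)) := by
  rintro ⟨k, hk⟩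
  have := congrArg (toInfDihedral m) hk
  simp [toInfDihedral_surfaceRelator, toInfDihedral_of_inl_zero, r_zpow] at this

theorem eq_zero_of_commute_surfaceRelator_zpow (m : ℕ) {k : ℤ}
    (h : Commute (FreeGroup.of (.inl 0)) (surfaceRelator (m + 1) ^ k)) : k = 0 := by
  have := congrArg (toInfDihedral m) h.eq
  simp [toInfDihedral_surfaceRelator, toInfDihedral_of_inl_zero, r_zpow] at this
  have : -(2 * k) = 2 * k := this
  omega

theorem surfaceRelator_add (m n : ℕ) :
    surfaceRelator (m + n) =
      FreeGroup.map (Sum.map (Fin.castAdd n) (Fin.castAdd n)) (surfaceRelator m) *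
        FreeGroup.map (Sum.map (Fin.natAdd m) (Fin.natAdd m)) (surfaceRelator n) := by
  rw [map_surfaceRelator, map_surfaceRelator, surfaceRelator, List.ofFn_add, List.prod_append]
  rfl

abbrev SurfaceGroup (g : ℕ) : Type :=
  PresentedGroup ({surfaceRelator g} : Set (FreeGroup (Fin g ⊕ Fin g)))

namespace SurfaceGroup

open PushoutI

variable (m n : ℕ)

/-- The free group on the generators of the first (`b = true`) or last (`b = false`) handles. -/
abbrev Factor (b : Bool) : Type := FreeGroup (Fin (cond b m n) ⊕ Fin (cond b m n))

def factorIncl : ∀ b, Factor m n b →* FreeGroup (Fin (m + n) ⊕ Fin (m + n))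
  | true => FreeGroup.map (Sum.map (Fin.castAdd n) (Fin.castAdd n))
  | false => FreeGroup.map (Sum.map (Fin.natAdd m) (Fin.natAdd m))

theorem factorIncl_surfaceRelator_mul :
    factorIncl m n true (surfaceRelator m) * factorIncl m n false (surfaceRelator n) =
      surfaceRelator (m + n) :=
  (surfaceRelator_add m n).symm

/-- The inverse on the second side makes `surfaceRelator (m + n)` trivial in the amalgam. -/
def amalgHom : ∀ b, Multiplicative ℤ →* Factor m n b
  | true => zpowersHom _ (surfaceRelator m)
  | false => zpowersHom _ (surfaceRelator n)⁻¹

abbrev Amalgam : Type := PushoutI (amalgHom m n)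

def amalgGen : Fin (m + n) ⊕ Fin (m + n) → Amalgam m n :=
  Sum.elim
    (Fin.addCases (fun i => of true (.of (.inl i))) fun j => of false (.of (.inl j)))
    (Fin.addCases (fun i => of true (.of (.inr i))) fun j => of false (.of (.inr j)))

theorem lift_amalgGen_comp_factorIncl (b : Bool) :
    (FreeGroup.lift (amalgGen m n)).comp (factorIncl m n b) = of b := by
  cases b <;> ext (i | i) <;> simp [factorIncl, amalgGen]

theorem lift_amalgGen_surfaceRelator :
    FreeGroup.lift (amalgGen m n) (surfaceRelator (m + n)) = 1 := by
  rw [← factorIncl_surfaceRelator_mul, map_mul, ← MonoidHom.comp_apply, ← MonoidHom.comp_apply,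
    lift_amalgGen_comp_factorIncl, lift_amalgGen_comp_factorIncl]
  have h_true : of true (surfaceRelator m) = base (amalgHom m n) (.ofAdd 1) := by
    rw [← of_apply_eq_base _ true]
    simp [amalgHom]
  have h_false : of false (surfaceRelator n) = (base (amalgHom m n) (.ofAdd 1))⁻¹ := by
    rw [← of_apply_eq_base _ false]
    simp [amalgHom]
  rw [h_true, h_false, mul_inv_cancel]

def toAmalgam : SurfaceGroup (m + n) →* Amalgam m n :=
  PresentedGroup.toGroup fun _ hr => hr ▸ lift_amalgGen_surfaceRelator m n

def ofFactor (b : Bool) : Factor m n b →* SurfaceGroup (m + n) :=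
  (PresentedGroup.mk _).comp (factorIncl m n b)

theorem ofFactor_surfaceRelator_mul :
    ofFactor m n true (surfaceRelator m) * ofFactor m n false (surfaceRelator n) = 1 := by
  rw [ofFactor, ofFactor, MonoidHom.comp_apply, MonoidHom.comp_apply, ← map_mul,
    factorIncl_surfaceRelator_mul]
  exact PresentedGroup.one_of_mem rfl

theorem ofFactor_comp_amalgHom (b : Bool) :
    (ofFactor m n b).comp (amalgHom m n b) =
      zpowersHom _ (ofFactor m n true (surfaceRelator m)) := by
  ext
  cases b
  · simp [amalgHom, eq_inv_of_mul_eq_one_left (ofFactor_surfaceRelator_mul m n)]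
  · simp [amalgHom]

def ofAmalgam : Amalgam m n →* SurfaceGroup (m + n) :=
  PushoutI.lift (ofFactor m n) _ (ofFactor_comp_amalgHom m n)

theorem toAmalgam_comp_mk :
    (toAmalgam m n).comp (PresentedGroup.mk _) = FreeGroup.lift (amalgGen m n) := by
  ext
  simp only [MonoidHom.comp_apply, FreeGroup.lift_apply_of]
  exact PresentedGroup.toGroup.of _

theorem toAmalgam_comp_ofFactor (b : Bool) : (toAmalgam m n).comp (ofFactor m n b) = of b := by
  rw [ofFactor, ← MonoidHom.comp_assoc, toAmalgam_comp_mk, lift_amalgGen_comp_factorIncl]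

def amalgamEquiv : SurfaceGroup (m + n) ≃* Amalgam m n :=
  (toAmalgam m n).toMulEquiv (ofAmalgam m n)
    (PresentedGroup.ext fun x => by
      rcases x with k | k <;> induction k using Fin.addCases <;>
        simp [toAmalgam, ofAmalgam, amalgGen, ofFactor, factorIncl] <;> rfl)
    (hom_ext_nonempty fun b => by
      refine MonoidHom.ext fun x => ?_
      simp only [MonoidHom.comp_apply, ofAmalgam, lift_of, MonoidHom.id_apply]
      exact DFunLike.congr_fun (toAmalgam_comp_ofFactor m n b) x)

theorem amalgHom_injective (b : Bool) : Injective (amalgHom (m + 1) (n + 1) b) := by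
  cases b
  · exact injective_zpowersHom fun h =>
      not_isOfFinOrder_surfaceRelator n (isOfFinOrder_inv_iff.1 h)
  · exact injective_zpowersHom (not_isOfFinOrder_surfaceRelator m)

theorem amalgHom_range_ne_top (b : Bool) : (amalgHom (m + 1) (n + 1) b).range ≠ ⊤ := by
  rw [Ne, eq_top_iff]
  intro htop
  cases b
  · have h := of_inl_zero_notMem_zpowers_surfaceRelator n
    rw [← zpowers_inv] at h
    exact h (htop (mem_top _))
  · exact of_inl_zero_notMem_zpowers_surfaceRelator m (htop (mem_top _))

theorem center_amalgam_eq_bot : center (Amalgam (m + 1) (n + 1)) = ⊥ := by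
  refine eq_bot_iff.2 fun z hz => ?_
  obtain ⟨k, rfl⟩ := center_le_range_base (amalgHom_injective m n)
    (amalgHom_range_ne_top m n) hz
  rw [← of_apply_eq_base _ true] at hz ⊢
  have hk : Commute (FreeGroup.of (.inl 0)) (surfaceRelator (m + 1) ^ k.toAdd) :=
    of_injective (amalgHom_injective m n) true <| by
      simpa only [map_mul, amalgHom, zpowersHom_apply] using mem_center_iff.1 hz
        (of true (FreeGroup.of (.inl 0) : FreeGroup (Fin (m + 1) ⊕ Fin (m + 1))))
  rw [show k = 1 from eq_zero_of_commute_surfaceRelator_zpow m hk, map_one, map_one]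
  exact one_mem _

end SurfaceGroup

/-- The fundamental group of a closed orientable surface of genus `g ≥ 2`
has trivial center. -/
theorem stmt18 (g : ℕ) (hg : 2 ≤ g) :
    Subgroup.center (PresentedGroup ({surfaceRelator g} :
      Set (FreeGroup (Fin g ⊕ Fin g)))) = ⊥ := by
  obtain ⟨m, rfl⟩ : ∃ m, g = m + 1 + (0 + 1) := ⟨g - 2, by omega⟩
  exact center_eq_bot_of_mulEquiv (SurfaceGroup.amalgamEquiv _ _)
    (SurfaceGroup.center_amalgam_eq_bot m 0)
end
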